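/- Let C ↔ f : [a,b] → ℝ^M (a < b) be a continuous curve. For x ∈ ℝ^M let N(f;x) denote the number (finite or +∞) of points t ∈ [a,b] with f(t) = x (so N(f;x) = 0 for x outside the graph [C]). Then ℓ(C) = ∫_{ℝ^M} N(f;x) dH¹(x), where H¹ is the 1-dimensional Hausdorff measure on ℝ^M. -/

import Mathlib

open scoped BigOperators ENNReal
open MeasureTheory Filter

noncomputable section

/-- A partition `a = x 0 < x 1 < ⋯ < x n = b` of the interval `[a,b]`. -/
structure IntervalPartition (a b : ℝ) where
  n : ℕ
  x : Fin (n + 1) → ℝ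
  mono : StrictMono x
  first : x 0 = a
  last : x (Fin.last n) = b

/-- The mesh `‖P‖ = maxᵢ (xᵢ − xᵢ₋₁)` of a partition. -/
def IntervalPartition.mesh {a b : ℝ} (P : IntervalPartition a b) : ℝ :=
  ⨆ i : Fin P.n, (P.x i.succ - P.x i.castSucc)

/-- The inscribed sum `V(f;P) = Σᵢ ‖f(xᵢ) − f(xᵢ₋₁)‖`. -/
def inscribedSum {M : ℕ} (f : ℝ → EuclideanSpace ℝ (Fin M)) {a b : ℝ}
    (P : IntervalPartition a b) : ℝ :=
  ∑ i : Fin P.n, ‖f (P.x i.succ) - f (P.x i.castSucc)‖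

/-- The length `ℓ(C)` of the curve `C ↔ f : [a,b] → ℝ^M`: the supremum of the inscribed sums
over all partitions of `[a,b]`, a value in `[0,+∞]`. -/
def curveLength {M : ℕ} (f : ℝ → EuclideanSpace ℝ (Fin M)) (a b : ℝ) : ℝ≥0∞ :=
  ⨆ P : IntervalPartition a b, ENNReal.ofReal (inscribedSum f P)

/-- The total variation `T_h[a,b]` of a real function `h` on `[a,b]`. -/
def totalVariation (h : ℝ → ℝ) (a b : ℝ) : ℝ≥0∞ :=
  ⨆ P : IntervalPartition a b, ENNReal.ofReal (∑ i : Fin P.n, |h (P.x i.succ) - h (P.x i.castSucc)|)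

/-- The positive variation `T_h⁺[a,b]` of a real function `h` on `[a,b]`. -/
def posVariation (h : ℝ → ℝ) (a b : ℝ) : ℝ≥0∞ :=
  ⨆ P : IntervalPartition a b,
    ENNReal.ofReal (∑ i : Fin P.n, max (h (P.x i.succ) - h (P.x i.castSucc)) 0)

/-- The negative variation `T_h⁻[a,b]` of a real function `h` on `[a,b]`. -/
def negVariation (h : ℝ → ℝ) (a b : ℝ) : ℝ≥0∞ :=
  ⨆ P : IntervalPartition a b,
    ENNReal.ofReal (∑ i : Fin P.n, max (h (P.x i.castSucc) - h (P.x i.succ)) 0)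

/-- `h` is absolutely continuous on `[a,b]`: for every `ε > 0` there is `δ > 0` such that
`Σᵢ |h(vᵢ) − h(uᵢ)| < ε` for every finite family of pairwise non-overlapping subintervals
`[uᵢ,vᵢ]` of `[a,b]` of total length `< δ`. -/
def AbsContOn (h : ℝ → ℝ) (a b : ℝ) : Prop :=
  ∀ ε > (0 : ℝ), ∃ δ > (0 : ℝ), ∀ n : ℕ, ∀ u v : Fin n → ℝ,
    (∀ i, a ≤ u i ∧ u i ≤ v i ∧ v i ≤ b) →
    (∀ i j, i ≠ j → Set.Ioo (u i) (v i) ∩ Set.Ioo (u j) (v j) = ∅) →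
    (∑ i, (v i - u i)) < δ → (∑ i, |h (v i) - h (u i)|) < ε

/-- `φ` is an increasing homeomorphism of `[a,b]` onto `[c,d]` sending `a` to `c` and `b` to `d`. -/
def IsIncrHomeo (φ : ℝ → ℝ) (a b c d : ℝ) : Prop :=
  ContinuousOn φ (Set.Icc a b) ∧ StrictMonoOn φ (Set.Icc a b) ∧ φ a = c ∧ φ b = d

/-- `f : [a,b] → ℝ^M` and `g : [c,d] → ℝ^M` are Fréchet equivalent. -/
def FrechetEquiv {M : ℕ} (f : ℝ → EuclideanSpace ℝ (Fin M)) (a b : ℝ)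
    (g : ℝ → EuclideanSpace ℝ (Fin M)) (c d : ℝ) : Prop :=
  ∀ ε > (0 : ℝ), ∃ φ : ℝ → ℝ, IsIncrHomeo φ a b c d ∧
    ∀ x ∈ Set.Icc a b, ‖f x - g (φ x)‖ < ε

/-- The Fréchet distance between the curves `C ↔ f : [a,b] → ℝ^M` and `D ↔ g : [c,d] → ℝ^M`. -/
def frechetDist {M : ℕ} (f : ℝ → EuclideanSpace ℝ (Fin M)) (a b : ℝ)
    (g : ℝ → EuclideanSpace ℝ (Fin M)) (c d : ℝ) : ℝ :=
  ⨅ φ : {φ : ℝ → ℝ // IsIncrHomeo φ a b c d}, ⨆ x ∈ Set.Icc a b, ‖f x - g (φ.1 x)‖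

/-- A parametric integrand: a continuous `F : ℝ^M × ℝ^M → ℝ` positively homogeneous of
degree 1 in the second variable. -/
def IsParametricIntegrand {M : ℕ}
    (F : EuclideanSpace ℝ (Fin M) → EuclideanSpace ℝ (Fin M) → ℝ) : Prop :=
  Continuous (fun p : EuclideanSpace ℝ (Fin M) × EuclideanSpace ℝ (Fin M) => F p.1 p.2) ∧
  ∀ K : ℝ, 0 ≤ K → ∀ x t, F x (K • t) = K * F x t

/-- `L` is the line integral `∫_C F` of `F` along the curve `C ↔ f : [a,b] → ℝ^M`:
the limit, as the mesh tends to `0`, of the Riemann-type sums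
`Σᵢ F(f(ξᵢ), f(xᵢ) − f(xᵢ₋₁))` over tagged partitions of `[a,b]`. -/
def IsLineIntegral {M : ℕ} (F : EuclideanSpace ℝ (Fin M) → EuclideanSpace ℝ (Fin M) → ℝ)
    (f : ℝ → EuclideanSpace ℝ (Fin M)) (a b : ℝ) (L : ℝ) : Prop :=
  ∀ ε > (0 : ℝ), ∃ δ > (0 : ℝ), ∀ P : IntervalPartition a b, P.mesh < δ →
    ∀ ξ : Fin P.n → ℝ, (∀ i, ξ i ∈ Set.Icc (P.x i.castSucc) (P.x i.succ)) →
    |(∑ i : Fin P.n, F (f (ξ i)) (f (P.x i.succ) - f (P.x i.castSucc))) - L| < ε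

/-! Both sides equal the total variation `eVariationOn f (Icc a b)`; for the length this is only a
matter of passing between partitions and monotone sequences.

Lower bound: for `s ≤ t` the `1`-Lipschitz map `dist · (f s)` sends `f '' [s, t]` onto
`[0, dist (f s) (f t)]` (intermediate value theorem), so `dist (f s) (f t) ≤ H¹ (f '' [s, t])`.
Summed over a partition, this bounds an inscribed sum by the integral of the number of pieces whose
image contains `x`. Pieces meet only at partition points, so off the countable, hence `H¹`-null,
image of those points this number is at most `N(f; x)`.

Upper bound: along uniform partitions of mesh tending to zero, any finite set of points of a fibre
eventually lies in distinct pieces, so `N(f; x)` is at most the `liminf` of the piece counts. By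
Fatou's lemma it remains to bound `∑ H¹ (f '' piece)` by the variation, and
`H¹ (f '' [c, d]) ≤ Var(f; [c, d])` follows by covering `f '' [c, d]` with the images of ever finer
pieces, whose diameters tend to zero (uniform continuity) and are bounded by the variations of `f`
on the pieces.
-/

open Set Metric Topology

theorem exists_mem_Icc_of_mem_Icc {u : ℕ → ℝ} {n : ℕ} (hn : 0 < n) {t : ℝ}
    (ht : t ∈ Icc (u 0) (u n)) : ∃ i < n, t ∈ Icc (u i) (u (i + 1)) := by
  have htn : t ≤ u (n - 1 + 1) := by rw [Nat.sub_add_cancel hn]; exact ht.2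
  have hex : ∃ i, t ≤ u (i + 1) := ⟨n - 1, htn⟩
  refine ⟨Nat.find hex, (Nat.find_min' hex htn).trans_lt (Nat.sub_lt hn one_pos), ?_,
    Nat.find_spec hex⟩
  rcases hi : Nat.find hex with _ | j
  · exact ht.1
  · exact (not_le.1 (Nat.find_min hex (hi ▸ j.lt_succ_self))).le

theorem eventually_div_add_one_lt (c : ℝ) {δ : ℝ} (hδ : 0 < δ) :
    ∀ᶠ k : ℕ in atTop, c / (k + 1) < δ := by
  have h := (tendsto_const_div_atTop_nhds_zero_nat c).comp (tendsto_add_atTop_nat 1)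
  filter_upwards [h.eventually (gt_mem_nhds hδ)] with k hk
  simpa using hk

/-- Equal to `b` from `i = k + 1` on, so that it is monotone on all of `ℕ`. -/
def uniformGrid (a b : ℝ) (k i : ℕ) : ℝ := a + ((min i (k + 1) : ℕ) : ℝ) * ((b - a) / (k + 1))

section uniformGrid

variable {a b : ℝ} {k : ℕ}

@[simp]
theorem uniformGrid_zero : uniformGrid a b k 0 = a := by simp [uniformGrid]

@[simp]
theorem uniformGrid_last : uniformGrid a b k (k + 1) = b := by
  simp only [uniformGrid, min_self]
  push_cast
  field_simp
  ring

theorem monotone_uniformGrid (hab : a ≤ b) : Monotone (uniformGrid a b k) := by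
  intro i j hij
  have : ((min i (k + 1) : ℕ) : ℝ) ≤ (min j (k + 1) : ℕ) := by
    exact_mod_cast min_le_min_right _ hij
  unfold uniformGrid
  gcongr

theorem uniformGrid_add_one_sub_le (hab : a ≤ b) (i : ℕ) :
    uniformGrid a b k (i + 1) - uniformGrid a b k i ≤ (b - a) / (k + 1) := by
  have h : ((min (i + 1) (k + 1) : ℕ) : ℝ) ≤ (min i (k + 1) : ℕ) + 1 := by
    exact_mod_cast (by omega : min (i + 1) (k + 1) ≤ min i (k + 1) + 1)
  have hmesh : 0 ≤ (b - a) / (k + 1) := by positivity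
  simp only [uniformGrid]
  nlinarith [mul_le_mul_of_nonneg_right h hmesh]

theorem Icc_uniformGrid_subset (hab : a ≤ b) {i : ℕ} (hi : i < k + 1) :
    Icc (uniformGrid a b k i) (uniformGrid a b k (i + 1)) ⊆ Icc a b := by
  have := Icc_subset_Icc (monotone_uniformGrid hab (k := k) i.zero_le)
    (monotone_uniformGrid hab (k := k) hi)
  rwa [uniformGrid_zero, uniformGrid_last] at this

end uniformGrid

section Variation

variable {E : Type*} [MetricSpace E] {f : ℝ → E}

theorem ediam_image_le_eVariationOn (f : ℝ → E) (s : Set ℝ) :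
    ediam (f '' s) ≤ eVariationOn f s := by
  refine ediam_le ?_
  rintro _ ⟨p, hp, rfl⟩ _ ⟨q, hq, rfl⟩
  exact eVariationOn.edist_le f hp hq

theorem tendsto_iSup_ediam_image_uniformGrid {a b : ℝ} (hab : a ≤ b)
    (hf : ContinuousOn f (Icc a b)) :
    Tendsto (fun k => ⨆ i : Fin (k + 1),
      ediam (f '' Icc (uniformGrid a b k i) (uniformGrid a b k (i + 1)))) atTop (𝓝 0) := by
  refine ENNReal.tendsto_nhds_zero.2 fun ε hε => ?_
  obtain ⟨η, -, hη, hηε⟩ := ENNReal.lt_iff_exists_real_btwn.1 hε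
  obtain ⟨δ, hδ, hfδ⟩ := Metric.uniformContinuousOn_iff_le.1
    (isCompact_Icc.uniformContinuousOn_of_continuous hf) η (ENNReal.ofReal_pos.1 hη)
  filter_upwards [eventually_div_add_one_lt (b - a) hδ] with k hk
  refine iSup_le fun i => ediam_le ?_
  rintro _ ⟨p, hp, rfl⟩ _ ⟨q, hq, rfl⟩
  have hpq : dist p q ≤ δ := ((Real.dist_le_of_mem_Icc hp hq).trans
    (uniformGrid_add_one_sub_le hab i)).trans hk.le
  have hsub := Icc_uniformGrid_subset hab i.isLt
  rw [edist_dist]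
  exact (ENNReal.ofReal_le_ofReal (hfδ p (hsub hp) q (hsub hq) hpq)).trans hηε.le

variable [MeasurableSpace E] [BorelSpace E]

theorem edist_le_hausdorffMeasure_image_Icc {s t : ℝ} (hst : s ≤ t)
    (hf : ContinuousOn f (Icc s t)) : edist (f s) (f t) ≤ μH[1] (f '' Icc s t) := by
  set g : E → ℝ := fun y => dist y (f s)
  have hg : LipschitzWith 1 g := LipschitzWith.dist_left (f s)
  have hivt : Icc 0 (dist (f t) (f s)) ⊆ g '' (f '' Icc s t) := by
    rw [image_image]
    simpa [g] using intermediate_value_Icc hst (hg.continuous.comp_continuousOn hf)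
  calc edist (f s) (f t) = volume (Icc 0 (dist (f t) (f s))) := by
        rw [Real.volume_Icc, sub_zero, edist_dist, dist_comm]
    _ ≤ μH[1] (g '' (f '' Icc s t)) := by
        rw [hausdorffMeasure_real]; exact measure_mono hivt
    _ ≤ μH[1] (f '' Icc s t) := by
        simpa using hg.hausdorffMeasure_image_le zero_le_one (f '' Icc s t)

theorem hausdorffMeasure_image_Icc_le_eVariationOn {a b : ℝ} (hab : a ≤ b)
    (hf : ContinuousOn f (Icc a b)) : μH[1] (f '' Icc a b) ≤ eVariationOn f (Icc a b) := by
  set piece : (k : ℕ) → Fin (k + 1) → Set ℝ :=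
    fun k i => Icc (uniformGrid a b k i) (uniformGrid a b k (i + 1))
  have hcover : ∀ k, f '' Icc a b ⊆ ⋃ i, f '' piece k i := by
    rintro k _ ⟨t, ht, rfl⟩
    obtain ⟨i, hi, hti⟩ := exists_mem_Icc_of_mem_Icc (u := uniformGrid a b k) (n := k + 1)
      k.succ_pos (by rwa [uniformGrid_zero, uniformGrid_last])
    exact mem_iUnion.2 ⟨⟨i, hi⟩, mem_image_of_mem f hti⟩
  have hsum : ∀ k, ∑ i, ediam (f '' piece k i) ^ (1 : ℝ) ≤ eVariationOn f (Icc a b) := by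
    intro k
    calc ∑ i, ediam (f '' piece k i) ^ (1 : ℝ) ≤ ∑ i, eVariationOn f (piece k i) := by
          simp only [ENNReal.rpow_one]
          exact Finset.sum_le_sum fun i _ => ediam_image_le_eVariationOn f _
      _ = eVariationOn f (Icc a b) := by
          rw [Fin.sum_univ_eq_sum_range (fun i => eVariationOn f (Icc (uniformGrid a b k i)
            (uniformGrid a b k (i + 1)))), eVariationOn.sum' f (monotone_uniformGrid hab),
            uniformGrid_zero, uniformGrid_last]
  calc μH[1] (f '' Icc a b) ≤ liminf (fun k => ∑ i, ediam (f '' piece k i) ^ (1 : ℝ)) atTop :=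
        Measure.hausdorffMeasure_le_liminf_sum _ _ _ (tendsto_iSup_ediam_image_uniformGrid hab hf)
          _ (.of_forall fun k i => le_iSup (fun i => ediam (f '' piece k i)) i)
          (.of_forall hcover)
    _ ≤ eVariationOn f (Icc a b) := liminf_le_of_frequently_le' (.of_forall hsum)

end Variation

/-- `N(f; x)` of the statement is `banachIndicatrix f (Icc a b) x`. -/
def banachIndicatrix {α β : Type*} (f : α → β) (s : Set α) (y : β) : ℝ≥0∞ :=
  ({t ∈ s | f t = y}.encard : ℝ≥0∞)

section banachIndicatrix

variable {α β : Type*} {f : α → β} {s t : Set α} {y : β}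

theorem banachIndicatrix_mono (hst : s ⊆ t) : banachIndicatrix f s y ≤ banachIndicatrix f t y :=
  ENat.toENNReal_le.2 (encard_mono fun _ hx => ⟨hst hx.1, hx.2⟩)

theorem banachIndicatrix_union (hst : Disjoint s t) :
    banachIndicatrix f (s ∪ t) y = banachIndicatrix f s y + banachIndicatrix f t y := by
  have hsep : {r ∈ s ∪ t | f r = y} = {r ∈ s | f r = y} ∪ {r ∈ t | f r = y} := by
    ext; simp [or_and_right]
  rw [banachIndicatrix, hsep, encard_union_eq (hst.mono (sep_subset _ _) (sep_subset _ _)),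
    ENat.toENNReal_add]
  rfl

theorem indicator_image_le_banachIndicatrix (hst : ∀ r ∈ s, f r = y → r ∈ t) :
    (f '' s).indicator 1 y ≤ banachIndicatrix f t y := by
  by_cases hy : y ∈ f '' s
  · obtain ⟨r, hr, rfl⟩ := hy
    have : (1 : ℕ∞) ≤ {r' ∈ t | f r' = f r}.encard :=
      one_le_encard_iff_nonempty.2 ⟨r, hst r hr rfl, rfl⟩
    rw [indicator_of_mem (mem_image_of_mem f hr), Pi.one_apply, banachIndicatrix]
    exact_mod_cast this
  · rw [indicator_of_notMem hy]
    exact zero_le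

theorem banachIndicatrix_le_of_forall_finset {L : ℝ≥0∞}
    (h : ∀ F : Finset α, (∀ t ∈ F, t ∈ s ∧ f t = y) → (F.card : ℝ≥0∞) ≤ L) :
    banachIndicatrix f s y ≤ L := by
  rcases Set.finite_or_infinite {t ∈ s | f t = y} with hfin | hinf
  · rw [banachIndicatrix, hfin.encard_eq_coe_toFinset_card, ENat.toENNReal_coe]
    exact h _ fun t ht => hfin.mem_toFinset.1 ht
  · rw [banachIndicatrix, hinf.encard_eq, ENat.toENNReal_top, ← ENNReal.iSup_natCast]
    refine iSup_le fun m => ?_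
    obtain ⟨F, hF, rfl⟩ := hinf.exists_subset_card_eq m
    exact h F fun t ht => hF ht

end banachIndicatrix

def pieceCount {E : Type*} (f : ℝ → E) (u : ℕ → ℝ) (n : ℕ) (x : E) : ℝ≥0∞ :=
  ∑ i ∈ Finset.range n, (f '' Icc (u i) (u (i + 1))).indicator 1 x

section pieceCount

variable {E : Type*} {f : ℝ → E} {u : ℕ → ℝ} {n : ℕ} {x : E}

theorem pieceCount_le_banachIndicatrix (hu : Monotone u) (hx : ∀ i, f (u i) ≠ x) (n : ℕ) :
    pieceCount f u n x ≤ banachIndicatrix f (Ico (u 0) (u n)) x := by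
  induction n with
  | zero => simp [pieceCount]
  | succ n ih =>
    have hpiece : (f '' Icc (u n) (u (n + 1))).indicator 1 x
        ≤ banachIndicatrix f (Ico (u n) (u (n + 1))) x :=
      indicator_image_le_banachIndicatrix fun t ht htx =>
        ⟨ht.1, ht.2.lt_of_ne fun h => hx (n + 1) (h ▸ htx)⟩
    rw [pieceCount, Finset.sum_range_succ, ← Ico_union_Ico_eq_Ico (hu n.zero_le) (hu n.le_succ),
      banachIndicatrix_union (Ico_disjoint_Ico_same)]
    exact add_le_add ih hpiece

theorem card_le_pieceCount (hn : 0 < n) {F : Finset ℝ}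
    (hF : ∀ t ∈ F, t ∈ Icc (u 0) (u n) ∧ f t = x)
    (hsep : ∀ p ∈ F, ∀ q ∈ F, p ≠ q → ∀ i < n, u (i + 1) - u i < dist p q) :
    (F.card : ℝ≥0∞) ≤ pieceCount f u n x := by
  classical
  have hcount : pieceCount f u n x =
      ({i ∈ Finset.range n | x ∈ f '' Icc (u i) (u (i + 1))} : Finset ℕ).card := by
    simp only [pieceCount, indicator_apply, Pi.one_apply]
    exact Finset.sum_boole _ _
  have : ∀ t ∈ F, ∃ i < n, t ∈ Icc (u i) (u (i + 1)) := fun t ht =>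
    exists_mem_Icc_of_mem_Icc hn (hF t ht).1
  choose! φ hφn hφ using this
  rw [hcount]
  refine Nat.cast_le.2 (Finset.card_le_card_of_injOn φ (fun t ht => ?_) fun p hp q hq hpq => ?_)
  · exact Finset.mem_filter.2 ⟨Finset.mem_range.2 (hφn t ht), t, hφ t ht, (hF t ht).2⟩
  · by_contra hne
    have hlt := hsep p hp q hq hne (φ p) (hφn p hp)
    have hle := Real.dist_le_of_mem_Icc (hφ p hp) (hpq ▸ hφ q hq)
    linarith

theorem banachIndicatrix_le_liminf_pieceCount {a b : ℝ} (hab : a ≤ b) (x : E) :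
    banachIndicatrix f (Icc a b) x
      ≤ liminf (fun k => pieceCount f (uniformGrid a b k) (k + 1) x) atTop := by
  refine banachIndicatrix_le_of_forall_finset fun F hF => ?_
  have hsep : ∀ᶠ k : ℕ in atTop, ∀ p ∈ F, ∀ q ∈ F, p ≠ q → (b - a) / (k + 1) < dist p q := by
    simp only [eventually_all_finset]
    intro p _ q _
    by_cases hpq : p = q
    · exact .of_forall fun _ h => absurd hpq h
    · exact (eventually_div_add_one_lt (b - a) (dist_pos.2 hpq)).mono fun _ hk _ => hk
  refine le_liminf_of_le (by isBoundedDefault) (hsep.mono fun k hk => ?_)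
  refine card_le_pieceCount k.succ_pos (by simpa using hF) fun p hp q hq hpq i _ => ?_
  exact (uniformGrid_add_one_sub_le hab i).trans_lt (hk p hp q hq hpq)

end pieceCount

section BanachIndicatrixTheorem

variable {E : Type*} [MetricSpace E] [MeasurableSpace E] [BorelSpace E] {f : ℝ → E} {a b : ℝ}

theorem measurableSet_image_Icc_of_lt {u : ℕ → ℝ} {n : ℕ} (hu : Monotone u)
    (hf : ContinuousOn f (Icc (u 0) (u n))) {i : ℕ} (hi : i < n) :
    MeasurableSet (f '' Icc (u i) (u (i + 1))) :=
  (isCompact_Icc.image_of_continuousOn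
    (hf.mono (Icc_subset_Icc (hu i.zero_le) (hu hi)))).measurableSet

theorem measurable_pieceCount {u : ℕ → ℝ} {n : ℕ} (hu : Monotone u)
    (hf : ContinuousOn f (Icc (u 0) (u n))) : Measurable (pieceCount f u n) :=
  Finset.measurable_sum _ fun _ hi =>
    measurable_one.indicator (measurableSet_image_Icc_of_lt hu hf (Finset.mem_range.1 hi))

theorem lintegral_pieceCount {u : ℕ → ℝ} {n : ℕ} (hu : Monotone u)
    (hf : ContinuousOn f (Icc (u 0) (u n))) :
    ∫⁻ x, pieceCount f u n x ∂μH[1] = ∑ i ∈ Finset.range n, μH[1] (f '' Icc (u i) (u (i + 1))) := by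
  have hmeas := fun i (hi : i ∈ Finset.range n) =>
    measurableSet_image_Icc_of_lt hu hf (Finset.mem_range.1 hi)
  unfold pieceCount
  rw [lintegral_finsetSum _ fun i hi => measurable_one.indicator (hmeas i hi)]
  exact Finset.sum_congr rfl fun i hi => lintegral_indicator_one (hmeas i hi)

theorem lintegral_pieceCount_le_eVariationOn {u : ℕ → ℝ} {n : ℕ} (hu : Monotone u)
    (hf : ContinuousOn f (Icc (u 0) (u n))) :
    ∫⁻ x, pieceCount f u n x ∂μH[1] ≤ eVariationOn f (Icc (u 0) (u n)) := by
  rw [lintegral_pieceCount hu hf, ← eVariationOn.sum' f hu]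
  exact Finset.sum_le_sum fun i hi => hausdorffMeasure_image_Icc_le_eVariationOn (hu i.le_succ)
    (hf.mono (Icc_subset_Icc (hu i.zero_le) (hu (Finset.mem_range.1 hi))))

theorem eVariationOn_le_lintegral_banachIndicatrix (hf : ContinuousOn f (Icc a b)) :
    eVariationOn f (Icc a b) ≤ ∫⁻ x, banachIndicatrix f (Icc a b) x ∂μH[1] := by
  refine iSup_le fun ⟨n, u, hu, hmem⟩ => ?_
  have hsub : Icc (u 0) (u n) ⊆ Icc a b := Icc_subset_Icc (hmem 0).1 (hmem n).2
  have hnull : μH[1] (f '' range u) = 0 :=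
    haveI := Measure.nullSingletonClass_hausdorff E one_pos
    ((countable_range u).image f).measure_zero _
  calc ∑ i ∈ Finset.range n, edist (f (u (i + 1))) (f (u i))
      ≤ ∑ i ∈ Finset.range n, μH[1] (f '' Icc (u i) (u (i + 1))) :=
        Finset.sum_le_sum fun i hi => by
          rw [edist_comm]
          exact edist_le_hausdorffMeasure_image_Icc (hu i.le_succ) (hf.mono ((Icc_subset_Icc
            (hu i.zero_le) (hu (Finset.mem_range.1 hi))).trans hsub))
    _ = ∫⁻ x, pieceCount f u n x ∂μH[1] := (lintegral_pieceCount hu (hf.mono hsub)).symm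
    _ ≤ ∫⁻ x, banachIndicatrix f (Icc a b) x ∂μH[1] := by
        refine lintegral_mono_ae ?_
        filter_upwards [measure_eq_zero_iff_ae_notMem.1 hnull] with x hx
        exact (pieceCount_le_banachIndicatrix hu (fun i h => hx ⟨u i, mem_range_self i, h⟩)
          n).trans (banachIndicatrix_mono (Ico_subset_Icc_self.trans hsub))

theorem lintegral_banachIndicatrix_le_eVariationOn (hf : ContinuousOn f (Icc a b)) :
    ∫⁻ x, banachIndicatrix f (Icc a b) x ∂μH[1] ≤ eVariationOn f (Icc a b) := by
  rcases lt_or_ge b a with hba | hab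
  · simp [banachIndicatrix, Icc_eq_empty hba.not_ge]
  have hgrid : ∀ k, ContinuousOn f (Icc (uniformGrid a b k 0) (uniformGrid a b k (k + 1))) :=
    fun k => by simpa using hf
  calc ∫⁻ x, banachIndicatrix f (Icc a b) x ∂μH[1]
      ≤ ∫⁻ x, liminf (fun k => pieceCount f (uniformGrid a b k) (k + 1) x) atTop ∂μH[1] :=
        lintegral_mono (banachIndicatrix_le_liminf_pieceCount hab)
    _ ≤ liminf (fun k => ∫⁻ x, pieceCount f (uniformGrid a b k) (k + 1) x ∂μH[1]) atTop :=
        lintegral_liminf_le fun k => measurable_pieceCount (monotone_uniformGrid hab) (hgrid k)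
    _ ≤ eVariationOn f (Icc a b) := liminf_le_of_frequently_le' (.of_forall fun k => by
        simpa using lintegral_pieceCount_le_eVariationOn (monotone_uniformGrid hab) (hgrid k))

theorem eVariationOn_eq_lintegral_banachIndicatrix (hf : ContinuousOn f (Icc a b)) :
    eVariationOn f (Icc a b) = ∫⁻ x, banachIndicatrix f (Icc a b) x ∂μH[1] :=
  (eVariationOn_le_lintegral_banachIndicatrix hf).antisymm
    (lintegral_banachIndicatrix_le_eVariationOn hf)

end BanachIndicatrixTheorem

namespace IntervalPartition

variable {a b : ℝ}

theorem range_x_subset (P : IntervalPartition a b) : range P.x ⊆ Icc a b := by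
  rintro _ ⟨i, rfl⟩
  exact ⟨P.first.symm.trans_le (P.mono.monotone (Fin.zero_le i)),
    (P.mono.monotone (Fin.le_last i)).trans_eq P.last⟩

theorem ofReal_inscribedSum {M : ℕ} (f : ℝ → EuclideanSpace ℝ (Fin M))
    (P : IntervalPartition a b) :
    ENNReal.ofReal (inscribedSum f P) = eVariationOn f (range P.x) := by
  set v : ℕ → ℝ := fun i => P.x (Fin.clamp i P.n)
  have hv : Monotone v := fun i j hij => P.mono.monotone (Fin.mk_le_mk.2 (min_le_min_right _ hij))
  have hrange : range P.x = v '' Iic P.n := by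
    ext t
    constructor
    · rintro ⟨i, rfl⟩
      exact ⟨i, Fin.is_le i, by simp [v, Fin.clamp, Nat.min_eq_left (Fin.is_le i)]⟩
    · rintro ⟨i, -, rfl⟩
      exact mem_range_self _
  rw [hrange, eVariationOn.image_range_of_monotone f hv, inscribedSum,
    ENNReal.ofReal_sum_of_nonneg fun _ _ => norm_nonneg _, ← Fin.sum_univ_eq_sum_range]
  refine Finset.sum_congr rfl fun i _ => ?_
  have hi : v i = P.x i.castSucc := congrArg P.x (Fin.ext (by simp [Fin.clamp]))
  have hi' : v (i + 1) = P.x i.succ := congrArg P.x (Fin.ext (by simp [Fin.clamp]))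
  rw [hi, hi', edist_comm, edist_dist, dist_eq_norm]

def ofFinset (T : Finset ℝ) (hT : ↑T ⊆ Icc a b) (ha : a ∈ T) (hb : b ∈ T) :
    IntervalPartition a b where
  n := T.card - 1
  x := T.orderEmbOfFin (Nat.sub_add_cancel (Finset.card_pos.2 ⟨a, ha⟩)).symm
  mono := (T.orderEmbOfFin _).strictMono
  first := by
    rw [← Fin.zero_eta, Finset.orderEmbOfFin_zero _ (Nat.succ_pos _)]
    exact le_antisymm (T.min'_le a ha) (hT (T.min'_mem _)).1
  last := by
    rw [show Fin.last (T.card - 1) = ⟨T.card - 1 + 1 - 1, by omega⟩ from Fin.ext (by simp),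
      Finset.orderEmbOfFin_last _ (Nat.succ_pos _)]
    exact le_antisymm (hT (T.max'_mem _)).2 (T.le_max' b hb)

theorem range_ofFinset (T : Finset ℝ) (hT : ↑T ⊆ Icc a b) (ha : a ∈ T) (hb : b ∈ T) :
    range (ofFinset T hT ha hb).x = T :=
  T.range_orderEmbOfFin _

end IntervalPartition

theorem curveLength_eq_eVariationOn {M : ℕ} (f : ℝ → EuclideanSpace ℝ (Fin M)) (a b : ℝ) :
    curveLength f a b = eVariationOn f (Icc a b) := by
  refine le_antisymm (iSup_le fun P => ?_) (iSup_le fun ⟨n, u, hu, hmem⟩ => ?_)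
  · rw [P.ofReal_inscribedSum]
    exact eVariationOn.mono f P.range_x_subset
  · have hab : a ≤ b := (hmem 0).1.trans (hmem 0).2
    set T : Finset ℝ := insert a (insert b ((Finset.range (n + 1)).image u))
    have hT : ↑T ⊆ Icc a b := by
      intro t ht
      simp only [T, Finset.coe_insert, Finset.coe_image, mem_insert_iff, mem_image] at ht
      rcases ht with rfl | rfl | ⟨i, -, rfl⟩
      exacts [⟨le_rfl, hab⟩, ⟨hab, le_rfl⟩, hmem i]
    have ha : a ∈ T := Finset.mem_insert_self _ _
    have hb : b ∈ T := Finset.mem_insert_of_mem (Finset.mem_insert_self _ _)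
    calc ∑ i ∈ Finset.range n, edist (f (u (i + 1))) (f (u i)) ≤ eVariationOn f T :=
          eVariationOn.sum_le_of_monotoneOn_Iic (hu.monotoneOn _) fun i hi =>
            Finset.mem_insert_of_mem (Finset.mem_insert_of_mem
              (Finset.mem_image_of_mem u (Finset.mem_range.2 (Nat.lt_succ_of_le hi))))
      _ = ENNReal.ofReal (inscribedSum f (IntervalPartition.ofFinset T hT ha hb)) := by
          rw [IntervalPartition.ofReal_inscribedSum, IntervalPartition.range_ofFinset]
      _ ≤ curveLength f a b := le_iSup (fun P => ENNReal.ofReal (inscribedSum f P)) _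

theorem length_eq_integral_multiplicity_general {M : ℕ} (a b : ℝ)
    (f : ℝ → EuclideanSpace ℝ (Fin M)) (hcont : ContinuousOn f (Set.Icc a b)) :
    curveLength f a b =
      ∫⁻ x, (({t ∈ Set.Icc a b | f t = x}).encard : ℝ≥0∞)
        ∂(MeasureTheory.Measure.hausdorffMeasure 1 :
            Measure (EuclideanSpace ℝ (Fin M))) :=
  (curveLength_eq_eVariationOn f a b).trans (eVariationOn_eq_lintegral_banachIndicatrix hcont)

/-- For a continuous curve `C ↔ f : [a,b] → ℝ^M`, with multiplicity function
`N(f;x) = #{t ∈ [a,b] : f t = x}` (a value in `[0,+∞]`),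
`ℓ(C) = ∫_{ℝ^M} N(f;x) dH¹(x)` where `H¹` is `1`-dimensional Hausdorff measure. -/
theorem length_eq_integral_multiplicity {M : ℕ} (a b : ℝ) (hab : a < b)
    (f : ℝ → EuclideanSpace ℝ (Fin M)) (hcont : ContinuousOn f (Set.Icc a b)) :
    curveLength f a b =
      ∫⁻ x, (({t ∈ Set.Icc a b | f t = x}).encard : ℝ≥0∞)
        ∂(MeasureTheory.Measure.hausdorffMeasure 1 :
            Measure (EuclideanSpace ℝ (Fin M))) :=
  length_eq_integral_multiplicity_general a b f hcont
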